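/- arXiv:2510.16812 — 5 statements merged into one kernel-verified Lean document; each statement's English description precedes it below -/
import Mathlib

section
/- Let G be a graph of order n with at least one edge and let G̃ be obtained from G by removing one edge. If 0 ≤ α ≤ 2/3, then λ_j(B_α(G)) ≥ λ_j(B_α(G̃)) for all j = 1,…,n, where eigenvalues are arranged in non-increasing order. -/
/-!
Since `B_α = (2α - 1) A + (1 - α) D`, its quadratic form is
`xᵀ B_α(G) x = ¼ ∑_{i ~ j} (α (x_i + x_j)² + (2 - 3α) (x_i - x_j)²)`, summed over ordered adjacent
pairs. For `0 ≤ α ≤ 2/3` every term is nonnegative, so deleting an edge lowers `B_α` in the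
Loewner order, and by the Courant–Fischer min-max principle every ordered eigenvalue can only
decrease.
-/

open Matrix

/-- The adjacency matrix of `G` over `ℝ`. -/
noncomputable def adjM {V : Type*} [Fintype V] [DecidableEq V]
    (G : SimpleGraph V) [DecidableRel G.Adj] : Matrix V V ℝ :=
  G.adjMatrix ℝ

/-- The diagonal degree matrix of `G`. -/
noncomputable def degM {V : Type*} [Fintype V] [DecidableEq V]
    (G : SimpleGraph V) [DecidableRel G.Adj] : Matrix V V ℝ :=
  Matrix.diagonal fun v => (G.degree v : ℝ)

/-- The Laplacian matrix `L(G) = D(G) - A(G)`. -/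
noncomputable def lapM {V : Type*} [Fintype V] [DecidableEq V]
    (G : SimpleGraph V) [DecidableRel G.Adj] : Matrix V V ℝ :=
  degM G - adjM G

/-- The matrix `B_α(G) = α A(G) + (1-α) L(G)`. -/
noncomputable def Balpha {V : Type*} [Fintype V] [DecidableEq V]
    (G : SimpleGraph V) [DecidableRel G.Adj] (α : ℝ) : Matrix V V ℝ :=
  α • adjM G + (1 - α) • lapM G

/-- The `j`-th largest eigenvalue (eigenvalues arranged in non-increasing order)
of a Hermitian real matrix. -/
noncomputable def eigDesc {n : ℕ} {M : Matrix (Fin n) (Fin n) ℝ}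
    (hM : M.IsHermitian) (j : Fin n) : ℝ :=
  (hM.eigenvalues ∘ Tuple.sort hM.eigenvalues) j.rev


open Finset Module Submodule

open scoped RealInnerProductSpace

lemma Submodule.exists_mem_inf_ne_zero_of_finrank_lt {K V : Type*} [DivisionRing K]
    [AddCommGroup V] [Module K V] [FiniteDimensional K V] (U W : Submodule K V)
    (h : finrank K V < finrank K U + finrank K W) : ∃ x ∈ U, x ∈ W ∧ x ≠ 0 := by
  have hsup : finrank K ↥(U ⊔ W) ≤ finrank K V := Submodule.finrank_le _
  have hinf : (U ⊓ W) ≠ ⊥ := by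
    intro hbot
    have := Submodule.finrank_sup_add_finrank_inf_eq U W
    rw [hbot, finrank_bot] at this
    omega
  obtain ⟨x, ⟨hxU, hxW⟩, hx⟩ := Submodule.exists_mem_ne_zero_of_ne_bot hinf
  exact ⟨x, hxU, hxW, hx⟩

namespace OrthonormalBasis

variable {ι 𝕜 E : Type*} [Fintype ι] [RCLike 𝕜] [NormedAddCommGroup E] [InnerProductSpace 𝕜 E]

lemma inner_eq_zero_of_mem_span_image (b : OrthonormalBasis ι 𝕜 E) {s : Set ι} {x : E}
    (hx : x ∈ span 𝕜 (b '' s)) {i : ι} (hi : i ∉ s) : inner 𝕜 (b i) x = 0 := by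
  rw [← b.repr_apply_apply, ← b.coe_toBasis_repr_apply, ← Finsupp.notMem_support_iff]
  exact fun h => hi (b.toBasis.repr_support_subset_of_mem_span s (by simpa using hx) h)

lemma finrank_span_image_finset (b : OrthonormalBasis ι 𝕜 E) (t : Finset ι) :
    finrank 𝕜 (span 𝕜 (b '' t)) = #t := by
  rw [Set.image_eq_range]
  simpa [Function.comp_def] using finrank_span_eq_card
    (b.orthonormal.linearIndependent.comp _ (Subtype.val_injective (p := (· ∈ (t : Set ι)))))

end OrthonormalBasis

namespace Matrix.IsHermitian

variable {ι : Type*} [Fintype ι] [DecidableEq ι] {A : Matrix ι ι ℝ}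

lemma inner_toEuclideanLin_self (hA : A.IsHermitian) (x : EuclideanSpace ℝ ι) :
    ⟪x, toEuclideanLin A x⟫ = ∑ i, hA.eigenvalues i * ⟪hA.eigenvectorBasis i, x⟫ ^ 2 := by
  set b := hA.eigenvectorBasis
  rw [← b.sum_inner_mul_inner]
  refine sum_congr rfl fun i _ => ?_
  have hAb : toEuclideanLin A (b i) = hA.eigenvalues i • b i := by
    ext k
    simpa using congrFun (hA.mulVec_eigenvectorBasis i) k
  rw [← (isSymmetric_toEuclideanLin_iff.mpr hA) (b i) x, hAb, real_inner_smul_left,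
    real_inner_comm x]
  ring

lemma mul_norm_sq_le_inner_toEuclideanLin_self (hA : A.IsHermitian) {s : Set ι} {c : ℝ}
    (hc : ∀ i ∈ s, c ≤ hA.eigenvalues i) {x : EuclideanSpace ℝ ι}
    (hx : x ∈ span ℝ (hA.eigenvectorBasis '' s)) :
    c * ‖x‖ ^ 2 ≤ ⟪x, toEuclideanLin A x⟫ := by
  rw [hA.inner_toEuclideanLin_self, ← hA.eigenvectorBasis.sum_sq_inner_right, mul_sum]
  refine sum_le_sum fun i _ => ?_
  by_cases hi : i ∈ s
  · exact mul_le_mul_of_nonneg_right (hc i hi) (sq_nonneg _)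
  · simp [hA.eigenvectorBasis.inner_eq_zero_of_mem_span_image hx hi]

lemma inner_toEuclideanLin_self_le_mul_norm_sq (hA : A.IsHermitian) {s : Set ι} {c : ℝ}
    (hc : ∀ i ∈ s, hA.eigenvalues i ≤ c) {x : EuclideanSpace ℝ ι}
    (hx : x ∈ span ℝ (hA.eigenvectorBasis '' s)) :
    ⟪x, toEuclideanLin A x⟫ ≤ c * ‖x‖ ^ 2 := by
  rw [hA.inner_toEuclideanLin_self, ← hA.eigenvectorBasis.sum_sq_inner_right, mul_sum]
  refine sum_le_sum fun i _ => ?_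
  by_cases hi : i ∈ s
  · exact mul_le_mul_of_nonneg_right (hc i hi) (sq_nonneg _)
  · simp [hA.eigenvectorBasis.inner_eq_zero_of_mem_span_image hx hi]

end Matrix.IsHermitian

theorem eigDesc_le_eigDesc_of_posSemidef_sub {n : ℕ} {M N : Matrix (Fin n) (Fin n) ℝ}
    (hM : M.IsHermitian) (hN : N.IsHermitian) (hMN : (M - N).PosSemidef) (j : Fin n) :
    eigDesc hN j ≤ eigDesc hM j := by
  set σM := Tuple.sort hM.eigenvalues
  set σN := Tuple.sort hN.eigenvalues
  -- min-max: the top `n - j.rev` eigenvectors of `N` and the bottom `j.rev + 1` of `M` meet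
  set U := span ℝ (hN.eigenvectorBasis '' ↑((Ici j.rev).image σN))
  set W := span ℝ (hM.eigenvectorBasis '' ↑((Iic j.rev).image σM))
  have hdim : finrank ℝ (EuclideanSpace ℝ (Fin n)) < finrank ℝ U + finrank ℝ W := by
    rw [finrank_euclideanSpace_fin, OrthonormalBasis.finrank_span_image_finset,
      OrthonormalBasis.finrank_span_image_finset, card_image_of_injective _ σN.injective,
      card_image_of_injective _ σM.injective, Fin.card_Ici, Fin.card_Iic]
    omega
  obtain ⟨x, hxU, hxW, hx⟩ := Submodule.exists_mem_inf_ne_zero_of_finrank_lt U W hdim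
  have hN_le : eigDesc hN j * ‖x‖ ^ 2 ≤ ⟪x, toEuclideanLin N x⟫ := by
    refine hN.mul_norm_sq_le_inner_toEuclideanLin_self ?_ hxU
    simp only [coe_image, Set.mem_image, mem_coe, mem_Ici, forall_exists_index, and_imp]
    rintro _ k hk rfl
    exact Tuple.monotone_sort hN.eigenvalues hk
  have hM_le : ⟪x, toEuclideanLin M x⟫ ≤ eigDesc hM j * ‖x‖ ^ 2 := by
    refine hM.inner_toEuclideanLin_self_le_mul_norm_sq ?_ hxW
    simp only [coe_image, Set.mem_image, mem_coe, mem_Iic, forall_exists_index, and_imp]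
    rintro _ k hk rfl
    exact Tuple.monotone_sort hM.eigenvalues hk
  have hNM : ⟪x, toEuclideanLin N x⟫ ≤ ⟪x, toEuclideanLin M x⟫ := by
    have := (Matrix.isPositive_toEuclideanLin_iff.mpr hMN).inner_nonneg_right x
    rwa [map_sub, LinearMap.sub_apply, inner_sub_right, sub_nonneg] at this
  exact le_of_mul_le_mul_right (hN_le.trans (hNM.trans hM_le)) (by positivity)

section Balpha

variable {V : Type*} [Fintype V] [DecidableEq V]

lemma isHermitian_Balpha (G : SimpleGraph V) [DecidableRel G.Adj] (α : ℝ) :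
    (Balpha G α).IsHermitian :=
  ((G.isHermitian_adjMatrix ℝ).smul (IsSelfAdjoint.all α)).add
    ((G.isHermitian_lapMatrix ℝ).smul (IsSelfAdjoint.all (1 - α)))

lemma dotProduct_Balpha_mulVec (G : SimpleGraph V) [DecidableRel G.Adj] (α : ℝ) (x : V → ℝ) :
    x ⬝ᵥ (Balpha G α *ᵥ x) = (∑ i, ∑ j, if G.Adj i j then
      α * (x i + x j) ^ 2 + (2 - 3 * α) * (x i - x j) ^ 2 else 0) / 4 := by
  have hlap : x ⬝ᵥ (lapM G *ᵥ x) = (∑ i, ∑ j, if G.Adj i j then (x i - x j) ^ 2 else 0) / 2 :=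
    (toLinearMap₂'_apply' (G.lapMatrix ℝ) x x).symm.trans (G.lapMatrix_toLinearMap₂' ℝ x)
  rw [Balpha, add_mulVec, smul_mulVec, smul_mulVec, dotProduct_add, dotProduct_smul,
    dotProduct_smul, hlap, adjM, G.dotProduct_mulVec_adjMatrix, smul_eq_mul, smul_eq_mul]
  simp only [mul_div_assoc', mul_sum, sum_div, ← sum_add_distrib]
  refine sum_congr rfl fun i _ => sum_congr rfl fun j _ => ?_
  split_ifs <;> ring

lemma posSemidef_Balpha_sub_Balpha_of_le {G H : SimpleGraph V} [DecidableRel G.Adj]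
    [DecidableRel H.Adj] (hHG : H ≤ G) {α : ℝ} (hα0 : 0 ≤ α) (hα : α ≤ 2 / 3) :
    (Balpha G α - Balpha H α).PosSemidef := by
  refine .of_dotProduct_mulVec_nonneg ((isHermitian_Balpha G α).sub (isHermitian_Balpha H α))
    fun x => ?_
  rw [star_trivial, sub_mulVec, dotProduct_sub, sub_nonneg, dotProduct_Balpha_mulVec,
    dotProduct_Balpha_mulVec]
  gcongr with i _ j _
  split_ifs with hH hG
  · exact le_rfl
  · exact absurd (hHG hH) hG
  · have : 0 ≤ 2 - 3 * α := by linarith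
    positivity
  · exact le_rfl

end Balpha

theorem stmt_5_general {n : ℕ} (G : SimpleGraph (Fin n)) [DecidableRel G.Adj]
    (e : Sym2 (Fin n))
    [DecidableRel (G.deleteEdges {e}).Adj]
    (α : ℝ) (hα0 : 0 ≤ α) (hα : α ≤ 2/3)
    (hG : (Balpha G α).IsHermitian)
    (hG' : (Balpha (G.deleteEdges {e}) α).IsHermitian)
    (j : Fin n) :
    eigDesc hG' j ≤ eigDesc hG j :=
  eigDesc_le_eigDesc_of_posSemidef_sub hG hG'
    (posSemidef_Balpha_sub_Balpha_of_le (G.deleteEdges_le {e}) hα0 hα) j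

theorem stmt_5 {n : ℕ} (G : SimpleGraph (Fin n)) [DecidableRel G.Adj]
    (e : Sym2 (Fin n)) (he : e ∈ G.edgeSet)
    [DecidableRel (G.deleteEdges {e}).Adj]
    (α : ℝ) (hα0 : 0 ≤ α) (hα : α ≤ 2/3)
    (hG : (Balpha G α).IsHermitian)
    (hG' : (Balpha (G.deleteEdges {e}) α).IsHermitian)
    (j : Fin n) :
    eigDesc hG' j ≤ eigDesc hG j :=
  stmt_5_general G e α hα0 hα hG hG' j
end

section
/- Let S ⊆ V(G) be an independent set such that all vertices in S have the same open neighborhood, and let d be the common degree. Then (1−α)d is an eigenvalue of B_α(G) with multiplicity at least |S| − 1. -/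
open Matrix

theorem stmt_10 {V : Type*} [Fintype V] [DecidableEq V]
    (G : SimpleGraph V) [DecidableRel G.Adj] (α : ℝ)
    (hα0 : 0 ≤ α) (hα1 : α ≤ 1)
    (S : Finset V)
    (hind : ∀ u ∈ S, ∀ v ∈ S, ¬ G.Adj u v)
    (hnbr : ∀ x ∈ S, ∀ y ∈ S, G.neighborFinset x = G.neighborFinset y)
    (d : ℕ) (hdeg : ∀ x ∈ S, G.degree x = d) :
    S.card - 1 ≤
      Module.finrank ℝ
        ↥(Module.End.eigenspace (Matrix.toLin' (Balpha G α)) ((1 - α) * d)) := by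
  classical
  rcases S.eq_empty_or_nonempty with hS | ⟨x0, hx0⟩
  · simp [hS]
  set p := Module.End.eigenspace (Matrix.toLin' (Balpha G α)) ((1 - α) * d) with hp
  -- key eigenvector computation
  have key : ∀ x ∈ S,
      (Balpha G α) *ᵥ (Pi.single x 1 - Pi.single x0 1)
        = ((1 - α) * d) • (Pi.single x 1 - Pi.single x0 1) := by
    intro x hx
    set v : V → ℝ := Pi.single x 1 - Pi.single x0 1 with hv
    have hadj : ∀ i, G.Adj i x ↔ G.Adj i x0 := by
      intro i
      have h := hnbr x hx x0 hx0
      constructor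
      · intro h1
        have : i ∈ G.neighborFinset x := by
          rwa [SimpleGraph.mem_neighborFinset, SimpleGraph.adj_comm]
        rw [h] at this
        rwa [SimpleGraph.mem_neighborFinset, SimpleGraph.adj_comm] at this
      · intro h1
        have : i ∈ G.neighborFinset x0 := by
          rwa [SimpleGraph.mem_neighborFinset, SimpleGraph.adj_comm]
        rw [← h] at this
        rwa [SimpleGraph.mem_neighborFinset, SimpleGraph.adj_comm] at this
    have hA : adjM G *ᵥ v = 0 := by
      funext i
      simp only [hv, mulVec_sub, Pi.sub_apply, Pi.zero_apply]
      rw [mulVec_single, mulVec_single]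
      simp [adjM, SimpleGraph.adjMatrix_apply, hadj i]
    have hD : degM G *ᵥ v = (d : ℝ) • v := by
      funext i
      simp only [degM, mulVec_diagonal, Pi.smul_apply, smul_eq_mul]
      by_cases h1 : i = x
      · subst h1; rw [hdeg i hx]
      · by_cases h2 : i = x0
        · subst h2; rw [hdeg i hx0]
        · have : v i = 0 := by simp [hv, Pi.single_apply, h1, h2]
          rw [this, mul_zero, mul_zero]
    have : Balpha G α *ᵥ v
        = α • (adjM G *ᵥ v) + (1 - α) • (degM G *ᵥ v - adjM G *ᵥ v) := by
      simp [Balpha, lapM, add_mulVec, sub_mulVec, smul_mulVec]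
    rw [this, hA, hD]
    simp [smul_smul]
  -- family of eigenvectors indexed by S.erase x0
  set ι := {y // y ∈ S.erase x0} with hι
  set f : ι → (V → ℝ) := fun y => Pi.single y.1 1 - Pi.single x0 1 with hf
  have hmem : ∀ y : ι, f y ∈ p := by
    intro y
    rw [hp, Module.End.mem_eigenspace_iff, Matrix.toLin'_apply]
    exact key y.1 (Finset.mem_of_mem_erase y.2)
  have hfind : LinearIndependent ℝ f := by
    apply LinearIndependent.of_comp (LinearMap.funLeft ℝ ℝ (Subtype.val : ι → V))
    have hc : (LinearMap.funLeft ℝ ℝ (Subtype.val : ι → V)) ∘ f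
        = fun y : ι => Pi.single y 1 := by
      funext y z
      have hz : z.1 ≠ x0 := Finset.ne_of_mem_erase z.2
      simp [hf, LinearMap.funLeft_apply, Pi.single_apply, hz, Subtype.val_inj]
    rw [hc]
    have := (Pi.basisFun ℝ ι).linearIndependent
    have heq : ⇑(Pi.basisFun ℝ ι) = fun y : ι => Pi.single y (1 : ℝ) := by
      funext y; simp [Pi.basisFun_apply]
    rwa [heq] at this
  -- lift to the eigenspace
  set w : ι → p := fun y => ⟨f y, hmem y⟩ with hw
  have hwind : LinearIndependent ℝ w := by
    apply LinearIndependent.of_comp p.subtype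
    exact hfind
  have hcard := hwind.fintype_card_le_finrank
  have : Fintype.card ι = S.card - 1 := by
    rw [show Fintype.card ι = (S.erase x0).card from Fintype.card_coe _,
      Finset.card_erase_of_mem hx0]
  omega
end

section
/- Let W ⊆ V(G) be a clique such that N_G(x) \ W = N_G(y) \ W for all x, y ∈ W, and let d be the common degree of vertices in W. Then d + 1 − α(d+2) is an eigenvalue of B_α(G) with multiplicity at least |W| − 1. -/
/-!
If `x ≠ y` are twin vertices of the clique `W`, the columns of `B_α(G)` indexed by `x` and `y`
agree outside `{x, y}`, so `e_x - e_y` is an eigenvector, with eigenvalue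
`B_α(x,x) - B_α(x,y) = (1 - α) d - (2α - 1)`. Fixing `y ∈ W`, the `|W| - 1` vectors `e_x - e_y`
are linearly independent, since restricting them to `W \ {y}` gives the standard basis.
-/

open Matrix

theorem Pi.linearIndependent_single_one_sub_single {ι R : Type*} [Ring R] [DecidableEq ι]
    (s : Finset ι) {y : ι} (hy : y ∉ s) :
    LinearIndependent R fun i : s => (Pi.single (i : ι) 1 - Pi.single y 1 : ι → R) := by
  refine LinearIndependent.of_comp (LinearMap.funLeft R R ((↑) : s → ι)) ?_
  convert Pi.linearIndependent_single_one s R using 1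
  ext i j
  have hj : (j : ι) ≠ y := fun h => hy (h ▸ j.2)
  simp only [Function.comp_apply, LinearMap.funLeft_apply, Pi.sub_apply, Pi.single_apply, hj,
    if_false, sub_zero, Subtype.coe_inj]

theorem Matrix.card_sub_one_le_finrank_eigenspace {n K : Type*} [Fintype n] [DecidableEq n]
    [Field K] (M : Matrix n n K) (μ : K) (W : Finset n)
    (hW : ∀ x ∈ W, ∀ y ∈ W, x ≠ y →
      M *ᵥ (Pi.single x 1 - Pi.single y 1) = μ • (Pi.single x 1 - Pi.single y 1)) :
    W.card - 1 ≤ Module.finrank K (Module.End.eigenspace (Matrix.toLin' M) μ) := by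
  obtain rfl | ⟨y, hy⟩ := W.eq_empty_or_nonempty
  · simp
  have hli := Pi.linearIndependent_single_one_sub_single (R := K) (W.erase y) (y := y) (by simp)
  have hmem : ∀ i : W.erase y,
      Pi.single (i : n) 1 - Pi.single y 1 ∈ Module.End.eigenspace (Matrix.toLin' M) μ := by
    rintro ⟨i, hi⟩
    rw [Finset.mem_erase] at hi
    rw [Module.End.mem_eigenspace_iff, Matrix.toLin'_apply]
    exact hW i hi.2 y hy hi.1
  have hli' : LinearIndependent K fun i => (⟨_, hmem i⟩ : Module.End.eigenspace _ μ) :=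
    LinearIndependent.of_comp (Submodule.subtype _) hli
  have hcard := hli'.fintype_card_le_finrank
  rwa [Fintype.card_coe, Finset.card_erase_of_mem hy] at hcard

theorem SimpleGraph.adj_iff_adj_of_sdiff_neighborFinset_eq {V : Type*} [Fintype V]
    [DecidableEq V] {G : SimpleGraph V} [DecidableRel G.Adj] {W : Finset V}
    (hclique : ∀ u ∈ W, ∀ v ∈ W, u ≠ v → G.Adj u v) {x y j : V} (hx : x ∈ W) (hy : y ∈ W)
    (hxy : G.neighborFinset x \ W = G.neighborFinset y \ W) (hjx : j ≠ x) (hjy : j ≠ y) :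
    G.Adj j x ↔ G.Adj j y := by
  by_cases hj : j ∈ W
  · exact iff_of_true (hclique j hj x hx hjx) (hclique j hj y hy hjy)
  · simpa [hj, G.adj_comm x, G.adj_comm y] using Finset.ext_iff.mp hxy j

section Balpha

variable {V : Type*} [Fintype V] [DecidableEq V] (G : SimpleGraph V) [DecidableRel G.Adj]
  (α : ℝ)

theorem Balpha_apply_self (v : V) : Balpha G α v v = (1 - α) * G.degree v := by
  simp [Balpha, lapM, adjM, degM]

theorem Balpha_apply_of_ne {u v : V} (h : u ≠ v) :
    Balpha G α u v = if G.Adj u v then 2 * α - 1 else 0 := by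
  simp only [Balpha, lapM, adjM, degM, Matrix.add_apply, Matrix.smul_apply, Matrix.sub_apply,
    diagonal_apply_ne _ h, SimpleGraph.adjMatrix_apply, smul_eq_mul]
  split_ifs <;> ring

theorem Balpha_mulVec_single_sub_single {W : Finset V}
    (hclique : ∀ u ∈ W, ∀ v ∈ W, u ≠ v → G.Adj u v)
    (hnbr : ∀ x ∈ W, ∀ y ∈ W, G.neighborFinset x \ W = G.neighborFinset y \ W)
    {d : ℕ} (hdeg : ∀ x ∈ W, G.degree x = d) {x y : V} (hx : x ∈ W) (hy : y ∈ W)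
    (hxy : x ≠ y) :
    Balpha G α *ᵥ (Pi.single x 1 - Pi.single y 1) =
      ((d : ℝ) + 1 - α * ((d : ℝ) + 2)) • (Pi.single x 1 - Pi.single y 1) := by
  ext j
  simp only [mulVec_sub, mulVec_single_one, Pi.sub_apply, Pi.smul_apply, col_apply,
    smul_eq_mul, Pi.single_apply]
  have hadj := hclique x hx y hy hxy
  by_cases hjx : j = x
  · subst hjx
    simp only [Balpha_apply_self, hdeg j hx, Balpha_apply_of_ne G α hxy, hadj, if_true,
      if_neg hxy, sub_zero, mul_one]
    ring
  by_cases hjy : j = y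
  · subst hjy
    simp only [Balpha_apply_self, hdeg j hy, Balpha_apply_of_ne G α hxy.symm, hadj.symm,
      if_true, if_neg hxy.symm, zero_sub, mul_neg, mul_one]
    ring
  have htwin := G.adj_iff_adj_of_sdiff_neighborFinset_eq hclique hx hy (hnbr x hx y hy) hjx hjy
  simp [Balpha_apply_of_ne, hjx, hjy, htwin]

end Balpha

theorem stmt_11_general {V : Type*} [Fintype V] [DecidableEq V]
    (G : SimpleGraph V) [DecidableRel G.Adj] (α : ℝ)
    (W : Finset V)
    (hclique : ∀ u ∈ W, ∀ v ∈ W, u ≠ v → G.Adj u v)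
    (hnbr : ∀ x ∈ W, ∀ y ∈ W, G.neighborFinset x \ W = G.neighborFinset y \ W)
    (d : ℕ) (hdeg : ∀ x ∈ W, G.degree x = d) :
    W.card - 1 ≤
      Module.finrank ℝ
        ↥(Module.End.eigenspace (Matrix.toLin' (Balpha G α))
            ((d : ℝ) + 1 - α * ((d : ℝ) + 2))) :=
  (Balpha G α).card_sub_one_le_finrank_eigenspace _ W fun _ hx _ hy hxy =>
    Balpha_mulVec_single_sub_single G α hclique hnbr hdeg hx hy hxy

theorem stmt_11 {V : Type*} [Fintype V] [DecidableEq V]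
    (G : SimpleGraph V) [DecidableRel G.Adj] (α : ℝ)
    (hα0 : 0 ≤ α) (hα1 : α ≤ 1)
    (W : Finset V)
    (hclique : ∀ u ∈ W, ∀ v ∈ W, u ≠ v → G.Adj u v)
    (hnbr : ∀ x ∈ W, ∀ y ∈ W, G.neighborFinset x \ W = G.neighborFinset y \ W)
    (d : ℕ) (hdeg : ∀ x ∈ W, G.degree x = d) :
    W.card - 1 ≤
      Module.finrank ℝ
        ↥(Module.End.eigenspace (Matrix.toLin' (Balpha G α))
            ((d : ℝ) + 1 - α * ((d : ℝ) + 2))) :=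
  stmt_11_general G α W hclique hnbr d hdeg
end

section
/- Let G be a graph in which every internal vertex is quasi-pendant (i.e., r(G) = q(G)). If 0 ≤ α ≤ 1 and α ≠ 1/2, then the multiplicity of 1−α as an eigenvalue of B_α(G) is exactly p(G) − q(G), where p(G) and q(G) are the numbers of pendant and quasi-pendant vertices respectively. -/
open Matrix

section Aux

variable {V : Type*} [Fintype V] [DecidableEq V] (G : SimpleGraph V) [DecidableRel G.Adj]

lemma balpha_mulVec (α : ℝ) (x : V → ℝ) (v : V) :
    (Balpha G α).mulVec x v
      = (1 - α) * (G.degree v : ℝ) * x v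
        + (2 * α - 1) * ∑ w ∈ G.neighborFinset v, x w := by
  simp only [Balpha, adjM, lapM, degM, Matrix.add_mulVec, Matrix.sub_mulVec,
    Matrix.smul_mulVec, Pi.add_apply, Pi.sub_apply, Pi.smul_apply,
    Matrix.mulVec_diagonal, SimpleGraph.adjMatrix_mulVec_apply, smul_eq_mul]
  ring

lemma neighborFinset_eq_singleton {v u : V} (hd : G.degree v = 1) (h : G.Adj v u) :
    G.neighborFinset v = {u} := by
  have hu : u ∈ G.neighborFinset v := by simpa using h
  have hc : (G.neighborFinset v).card = 1 := by
    rw [G.card_neighborFinset_eq_degree]; exact hd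
  exact Finset.eq_singleton_iff_unique_mem.mpr
    ⟨hu, fun w hw => Finset.card_le_one.mp hc.le w hw u hu⟩

lemma adj_unique {v u u' : V} (hd : G.degree v = 1) (h : G.Adj v u) (h' : G.Adj v u') :
    u = u' := by
  have hs := neighborFinset_eq_singleton G hd h'
  have hu : u ∈ G.neighborFinset v := by simpa using h
  rw [hs, Finset.mem_singleton] at hu
  exact hu

end Aux

theorem stmt_15 {V : Type*} [Fintype V] [DecidableEq V]
    (G : SimpleGraph V) [DecidableRel G.Adj] (α : ℝ)
    (hα0 : 0 ≤ α) (hα1 : α ≤ 1) (hα : α ≠ 1/2)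
    (hiso : ∀ v : V, 1 ≤ G.degree v)
    (hquasi : ∀ v : V, 2 ≤ G.degree v → ∃ u, G.Adj v u ∧ G.degree u = 1) :
    Module.finrank ℝ
        ↥(Module.End.eigenspace (Matrix.toLin' (Balpha G α)) (1 - α)) =
      (Finset.univ.filter fun v => G.degree v = 1).card -
        (Finset.univ.filter fun v => ∃ u, G.Adj v u ∧ G.degree u = 1).card := by
  classical
  have h2 : (2 * α - 1 : ℝ) ≠ 0 := by
    intro h; apply hα; linarith
  set E := Module.End.eigenspace (Matrix.toLin' (Balpha G α)) (1 - α) with hE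
  -- characterization of the eigenspace
  have memE : ∀ x : V → ℝ, x ∈ E ↔
      ((∀ v, (∃ u, G.Adj v u ∧ G.degree u = 1) → x v = 0) ∧
        ∀ v, ∑ w ∈ G.neighborFinset v, x w = 0) := by
    intro x
    rw [hE, Module.End.mem_eigenspace_iff]
    constructor
    · intro h
      have heq : ∀ v, (1 - α) * (G.degree v : ℝ) * x v
          + (2 * α - 1) * ∑ w ∈ G.neighborFinset v, x w = (1 - α) * x v := by
        intro v
        have hv := congrFun h v
        rw [Matrix.toLin'_apply, balpha_mulVec] at hv
        simpa using hv
      have hq : ∀ v, (∃ u, G.Adj v u ∧ G.degree u = 1) → x v = 0 := by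
        rintro v ⟨u, huv, hu⟩
        have h1 := heq u
        rw [hu] at h1
        have hsum0 : (2 * α - 1) * ∑ w ∈ G.neighborFinset u, x w = 0 := by
          push_cast at h1; linarith
        have hsum : ∑ w ∈ G.neighborFinset u, x w = 0 :=
          (mul_eq_zero.mp hsum0).resolve_left h2
        rwa [neighborFinset_eq_singleton G hu huv.symm, Finset.sum_singleton] at hsum
      refine ⟨hq, fun v => ?_⟩
      rcases eq_or_lt_of_le (hiso v) with h1 | h1
      · obtain ⟨u, hu⟩ := (G.degree_pos_iff_exists_adj v).mp (by omega)
        rw [neighborFinset_eq_singleton G h1.symm hu, Finset.sum_singleton]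
        exact hq u ⟨v, hu.symm, h1.symm⟩
      · have hv0 := hq v (hquasi v h1)
        have h1' := heq v
        rw [hv0] at h1'
        have hsum0 : (2 * α - 1) * ∑ w ∈ G.neighborFinset v, x w = 0 := by
          rw [mul_zero, zero_add] at h1'; rw [h1']; ring
        exact (mul_eq_zero.mp hsum0).resolve_left h2
    · rintro ⟨hq, hs⟩
      have key : ∀ v, (Balpha G α).mulVec x v = (1 - α) * x v := by
        intro v
        rw [balpha_mulVec, hs v, mul_zero, add_zero]
        rcases eq_or_lt_of_le (hiso v) with h1 | h1
        · rw [← h1]; push_cast; ring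
        · rw [hq v (hquasi v h1), mul_zero, mul_zero]
      funext v
      rw [Matrix.toLin'_apply, key v]
      simp
  -- the choice of a pendant neighbor of each internal vertex
  have hquasi2 := hquasi
  choose f0 hf0 using hquasi2
  have hex : ∀ v : V, ∃ u, G.Adj v u := fun v =>
    (G.degree_pos_iff_exists_adj v).mp (by have := hiso v; omega)
  obtain ⟨nb, nb_adj⟩ : ∃ nb : V → V, ∀ v, G.Adj v (nb v) :=
    ⟨fun v => (hex v).choose, fun v => (hex v).choose_spec⟩
  have nb_eq : ∀ {v u : V}, G.degree v = 1 → G.Adj v u → nb v = u := by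
    intro v u hd h
    exact adj_unique G hd (nb_adj v) h
  have hquasi3 : ∀ v : V, ∃ u : V, 2 ≤ G.degree v → G.Adj v u ∧ G.degree u = 1 := by
    intro v
    by_cases h : 2 ≤ G.degree v
    · exact ⟨f0 v h, fun _ => hf0 v h⟩
    · exact ⟨v, fun hc => absurd hc h⟩
  choose f hf using hquasi3
  have f_adj : ∀ u, 2 ≤ G.degree u → G.Adj u (f u) := fun u h => (hf u h).1
  have f_deg : ∀ u, 2 ≤ G.degree u → G.degree (f u) = 1 := fun u h => (hf u h).2
  have f_nq : ∀ u, 2 ≤ G.degree u → ¬ (∃ w, G.Adj (f u) w ∧ G.degree w = 1) := by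
    rintro u h ⟨w, hw, hwd⟩
    have hwu : w = u := adj_unique G (f_deg u h) hw ((f_adj u h).symm)
    rw [hwu] at hwd; omega
  have f_inj : ∀ u u', 2 ≤ G.degree u → 2 ≤ G.degree u' → f u = f u' → u = u' := by
    intro u u' hu hu' hff
    exact adj_unique G (f_deg u hu) ((f_adj u hu).symm) (hff ▸ (f_adj u' hu').symm)
  have nb_deg2 : ∀ v, G.degree v = 1 → ¬(∃ u, G.Adj v u ∧ G.degree u = 1) →
      2 ≤ G.degree (nb v) := by
    intro v hd hnq
    rcases eq_or_lt_of_le (hiso (nb v)) with h1 | h1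
    · exact absurd ⟨nb v, nb_adj v, h1.symm⟩ hnq
    · exact h1
  -- the finsets
  set P := Finset.univ.filter (fun v => G.degree v = 1) with hP
  set Q := Finset.univ.filter (fun v => ∃ u, G.Adj v u ∧ G.degree u = 1) with hQ
  set Q2 := Finset.univ.filter (fun v => 2 ≤ G.degree v) with hQ2
  set F := (P \ Q) \ Q2.image f with hF
  have memF : ∀ w, w ∈ F ↔ G.degree w = 1 ∧ ¬(∃ u, G.Adj w u ∧ G.degree u = 1) ∧
      ∀ u, 2 ≤ G.degree u → f u ≠ w := by
    intro w
    rw [hF, Finset.mem_sdiff, Finset.mem_sdiff, hP, hQ, Finset.mem_filter, Finset.mem_filter]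
    constructor
    · rintro ⟨⟨⟨-, h1⟩, h2⟩, h3⟩
      refine ⟨h1, fun h => h2 ⟨Finset.mem_univ w, h⟩, fun u hu he => ?_⟩
      exact h3 (Finset.mem_image.mpr ⟨u, Finset.mem_filter.mpr ⟨Finset.mem_univ u, hu⟩, he⟩)
    · rintro ⟨h1, h2, h3⟩
      refine ⟨⟨⟨Finset.mem_univ w, h1⟩, fun h => h2 h.2⟩, fun h => ?_⟩
      obtain ⟨u, hu, he⟩ := Finset.mem_image.mp h
      exact h3 u (Finset.mem_filter.mp hu).2 he
  have memIm : ∀ v, v ∈ Q2.image f ↔ ∃ u, 2 ≤ G.degree u ∧ f u = v := by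
    intro v
    rw [Finset.mem_image]
    constructor
    · rintro ⟨u, hu, he⟩; exact ⟨u, (Finset.mem_filter.mp hu).2, he⟩
    · rintro ⟨u, hu, he⟩; exact ⟨u, Finset.mem_filter.mpr ⟨Finset.mem_univ u, hu⟩, he⟩
  -- basis vectors
  set b0 : V → (V → ℝ) := fun w => Pi.single w 1 - Pi.single (f (nb w)) 1 with hb0
  have b0_apply : ∀ w v, b0 w v
      = (if v = w then (1:ℝ) else 0) - (if v = f (nb w) then 1 else 0) := by
    intro w v
    simp [hb0, Pi.single_apply]
  have fnb_notF : ∀ w w', w ∈ F → w' ∈ F → f (nb w) ≠ w' := by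
    intro w w' hw hw' he
    obtain ⟨h1, h2, h3⟩ := (memF w).mp hw
    obtain ⟨h1', h2', h3'⟩ := (memF w').mp hw'
    exact h3' (nb w) (nb_deg2 w h1 h2) he
  -- b0 w is an eigenvector for w ∈ F
  have hbE : ∀ w, w ∈ F → b0 w ∈ E := by
    intro w hw
    obtain ⟨hw1, hw2, hw3⟩ := (memF w).mp hw
    have h2nb : 2 ≤ G.degree (nb w) := nb_deg2 w hw1 hw2
    rw [memE]
    constructor
    · intro v hv
      have e1 : v ≠ w := fun h => hw2 (h ▸ hv)
      have e2 : v ≠ f (nb w) := fun h => f_nq (nb w) h2nb (h ▸ hv)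
      rw [b0_apply, if_neg e1, if_neg e2, sub_zero]
    · intro v
      have key1 : (w ∈ G.neighborFinset v) ↔ v = nb w := by
        rw [SimpleGraph.mem_neighborFinset]
        constructor
        · intro h; exact (nb_eq hw1 h.symm).symm
        · intro h; rw [h]; exact (nb_adj w).symm
      have hfd : G.degree (f (nb w)) = 1 := f_deg (nb w) h2nb
      have key2 : (f (nb w) ∈ G.neighborFinset v) ↔ v = nb w := by
        rw [SimpleGraph.mem_neighborFinset]
        constructor
        · intro h
          exact adj_unique G hfd h.symm ((f_adj (nb w) h2nb).symm)
        · intro h; rw [h]; exact (f_adj (nb w) h2nb)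
      simp only [b0_apply]
      rw [Finset.sum_sub_distrib]
      have s1 : ∀ (a : V), (∑ u ∈ G.neighborFinset v, if u = a then (1:ℝ) else 0)
          = if a ∈ G.neighborFinset v then 1 else 0 := by
        intro a
        rw [Finset.sum_ite_eq' (G.neighborFinset v) a (fun _ => (1:ℝ))]
      rw [s1, s1]
      by_cases hc : v = nb w
      · rw [if_pos (key1.mpr hc), if_pos (key2.mpr hc), sub_self]
      · rw [if_neg (fun h => hc (key1.mp h)), if_neg (fun h => hc (key2.mp h)), sub_self]
  -- decomposition of any eigenvector
  have hdecomp : ∀ x : V → ℝ, x ∈ E → x = ∑ w ∈ F, x w • b0 w := by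
    intro x hx
    obtain ⟨hq, hs⟩ := (memE x).mp hx
    funext v
    have hsum_apply : (∑ w ∈ F, x w • b0 w) v = ∑ w ∈ F, x w * b0 w v := by
      rw [Finset.sum_apply]
      exact Finset.sum_congr rfl fun w _ => by rw [Pi.smul_apply, smul_eq_mul]
    rw [hsum_apply]
    by_cases hqv : ∃ u, G.Adj v u ∧ G.degree u = 1
    · -- quasi-pendant vertex : both sides vanish
      rw [hq v hqv]
      symm
      apply Finset.sum_eq_zero
      intro w hw
      obtain ⟨hw1, hw2, hw3⟩ := (memF w).mp hw
      have e1 : v ≠ w := fun h => hw2 (h ▸ hqv)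
      have e2 : v ≠ f (nb w) := fun h => f_nq (nb w) (nb_deg2 w hw1 hw2) (h ▸ hqv)
      rw [b0_apply, if_neg e1, if_neg e2, sub_zero, mul_zero]
    · have hdv : G.degree v = 1 := by
        rcases eq_or_lt_of_le (hiso v) with h1 | h1
        · exact h1.symm
        · exact absurd (hquasi v h1) hqv
      by_cases hvF : v ∈ F
      · -- free coordinate
        symm
        rw [Finset.sum_eq_single v]
        · rw [b0_apply, if_pos rfl, if_neg (fun h => fnb_notF v v hvF hvF h.symm),
            sub_zero, mul_one]
        · intro w hw hne
          have e1 : v ≠ w := fun h => hne h.symm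
          have e2 : v ≠ f (nb w) := fun h => fnb_notF w v hw hvF h.symm
          rw [b0_apply, if_neg e1, if_neg e2, sub_zero, mul_zero]
        · intro h; exact absurd hvF h
      · -- v is a chosen pendant vertex f u
        have hvPQ : v ∈ P \ Q := by
          rw [Finset.mem_sdiff, hP, hQ, Finset.mem_filter, Finset.mem_filter]
          exact ⟨⟨Finset.mem_univ v, hdv⟩, fun h => hqv h.2⟩
        have hvim : v ∈ Q2.image f := by
          by_contra hni
          exact hvF (by rw [hF, Finset.mem_sdiff]; exact ⟨hvPQ, hni⟩)
        obtain ⟨u, hu2, hfu⟩ := (memIm v).mp hvim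
        have hadjvu : G.Adj v u := hfu ▸ (f_adj u hu2).symm
        have hnbv : nb v = u := nb_eq hdv hadjvu
        -- each term of the sum
        have hterm : ∀ w ∈ F, x w * b0 w v = -(if w ∈ G.neighborFinset u then x w else 0) := by
          intro w hw
          obtain ⟨hw1, hw2, hw3⟩ := (memF w).mp hw
          have h2nb : 2 ≤ G.degree (nb w) := nb_deg2 w hw1 hw2
          have e1 : v ≠ w := fun h => hvF (h ▸ hw)
          have key : (v = f (nb w)) ↔ w ∈ G.neighborFinset u := by
            constructor
            · intro h
              have : nb w = u := f_inj (nb w) u h2nb hu2 (by rw [← h, hfu])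
              rw [SimpleGraph.mem_neighborFinset, ← this]
              exact (nb_adj w).symm
            · intro h
              have : nb w = u := nb_eq hw1 (SimpleGraph.mem_neighborFinset .. |>.mp h).symm
              rw [this, hfu]
          rw [b0_apply, if_neg e1]
          by_cases hc : w ∈ G.neighborFinset u
          · rw [if_pos (key.mpr hc), if_pos hc]; ring
          · rw [if_neg (fun h => hc (key.mp h)), if_neg hc]; ring
        rw [Finset.sum_congr rfl hterm, Finset.sum_neg_distrib, Finset.sum_ite_mem]
        have hvN : v ∈ G.neighborFinset u := by
          rw [SimpleGraph.mem_neighborFinset]; exact hadjvu.symm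
        have hsub : F ∩ G.neighborFinset u ⊆ (G.neighborFinset u).erase v := by
          intro z hz
          rw [Finset.mem_erase]
          obtain ⟨hzF, hzN⟩ := Finset.mem_inter.mp hz
          exact ⟨fun h => hvF (h ▸ hzF), hzN⟩
        have hzero : ∀ z ∈ (G.neighborFinset u).erase v,
            z ∉ F ∩ G.neighborFinset u → x z = 0 := by
          intro z hz hz'
          rw [Finset.mem_erase] at hz
          obtain ⟨hzv, hzN⟩ := hz
          have hzF : z ∉ F := fun h => hz' (Finset.mem_inter.mpr ⟨h, hzN⟩)
          by_cases hzq : ∃ u', G.Adj z u' ∧ G.degree u' = 1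
          · exact hq z hzq
          · exfalso
            have hdz : G.degree z = 1 := by
              rcases eq_or_lt_of_le (hiso z) with h1 | h1
              · exact h1.symm
              · exact absurd (hquasi z h1) hzq
            have hzPQ : z ∈ P \ Q := by
              rw [Finset.mem_sdiff, hP, hQ, Finset.mem_filter, Finset.mem_filter]
              exact ⟨⟨Finset.mem_univ z, hdz⟩, fun h => hzq h.2⟩
            have hzim : z ∈ Q2.image f := by
              by_contra hni
              exact hzF (by rw [hF, Finset.mem_sdiff]; exact ⟨hzPQ, hni⟩)
            obtain ⟨u', hu2', hfu'⟩ := (memIm z).mp hzim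
            have huu : u' = u := by
              apply adj_unique G hdz
              · exact (hfu' ▸ (f_adj u' hu2').symm)
              · rw [SimpleGraph.mem_neighborFinset] at hzN
                exact hzN.symm
            exact hzv (by rw [← hfu', huu, hfu])
        have hErase : ∑ z ∈ (G.neighborFinset u).erase v, x z
            = ∑ z ∈ F ∩ G.neighborFinset u, x z :=
          (Finset.sum_subset hsub hzero).symm
        have hsu := hs u
        rw [← Finset.add_sum_erase _ x hvN, hErase] at hsu
        linarith [hsu]
  -- the eigenspace is the span of the vectors b0 w, w ∈ F
  have hspan : E = Submodule.span ℝ (Set.range (fun w : ↥F => b0 (w : V))) := by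
    apply le_antisymm
    · intro x hx
      rw [hdecomp x hx]
      apply Submodule.sum_mem
      intro w hw
      exact Submodule.smul_mem _ _ (Submodule.subset_span ⟨⟨w, hw⟩, rfl⟩)
    · rw [Submodule.span_le]
      rintro y ⟨w, rfl⟩
      exact hbE (w : V) w.2
  have hind : LinearIndependent ℝ (fun w : ↥F => b0 (w : V)) := by
    rw [Fintype.linearIndependent_iff]
    intro g hg w
    have hterm : ∀ i : ↥F, (g i • b0 (i : V)) (w : V) = if i = w then g i else 0 := by
      intro i
      rw [Pi.smul_apply, smul_eq_mul, b0_apply]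
      have e2 : (w : V) ≠ f (nb (i : V)) := fun h => fnb_notF (i : V) (w : V) i.2 w.2 h.symm
      rw [if_neg e2, sub_zero]
      by_cases hc : i = w
      · rw [if_pos (by rw [hc]), mul_one, if_pos hc]
      · rw [if_neg (fun h => hc (Subtype.ext h.symm)), mul_zero, if_neg hc]
    have hgw := congrFun hg (w : V)
    rw [Finset.sum_apply, Finset.sum_congr rfl (fun i _ => hterm i),
      Finset.sum_ite_eq' Finset.univ w g] at hgw
    simpa using hgw
  have hrank : Module.finrank ℝ ↥E = F.card := by
    rw [hspan, finrank_span_eq_card hind, Fintype.card_coe]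
  -- counting
  have himsub : Q2.image f ⊆ P \ Q := by
    intro v hv
    obtain ⟨u, hu2, hfu⟩ := (memIm v).mp hv
    rw [Finset.mem_sdiff, hP, hQ, Finset.mem_filter, Finset.mem_filter]
    refine ⟨⟨Finset.mem_univ v, hfu ▸ f_deg u hu2⟩, fun h => ?_⟩
    apply f_nq u hu2
    rw [hfu]
    exact h.2
  have hinjOn : Set.InjOn f ↑Q2 := by
    intro a ha b hb hab
    rw [Finset.coe_filter] at ha hb
    exact f_inj a b ha.2 hb.2 hab
  have hc1 : (Q2.image f).card = Q2.card := Finset.card_image_of_injOn hinjOn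
  have hc2 : F.card + (Q2.image f).card = (P \ Q).card := by
    rw [hF]; exact Finset.card_sdiff_add_card_eq_card himsub
  have hc3 : (P \ Q).card + (P ∩ Q).card = P.card := Finset.card_sdiff_add_card_inter P Q
  have hc4 : (Q \ P).card + (Q ∩ P).card = Q.card := Finset.card_sdiff_add_card_inter Q P
  have hc5 : Q \ P = Q2 := by
    ext v
    rw [Finset.mem_sdiff, hQ, hQ2, hP, Finset.mem_filter, Finset.mem_filter, Finset.mem_filter]
    constructor
    · rintro ⟨⟨-, hq'⟩, hnp⟩
      refine ⟨Finset.mem_univ v, ?_⟩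
      rcases eq_or_lt_of_le (hiso v) with h1 | h1
      · exact absurd ⟨Finset.mem_univ v, h1.symm⟩ hnp
      · exact h1
    · rintro ⟨-, h2d⟩
      exact ⟨⟨Finset.mem_univ v, hquasi v h2d⟩, fun h => by have := h.2; omega⟩
  have hc6 : (P ∩ Q).card = (Q ∩ P).card := by rw [Finset.inter_comm]
  rw [hrank]
  rw [hc5] at hc4
  omega
end

section
/- For any graph G with pendant vertices, 1−α is an eigenvalue of B_α(G) with multiplicity at least p(G) − q(G), where p(G) is the number of pendant vertices and q(G) the number of quasi-pendant vertices. -/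
open Matrix

/-- A degree-one vertex has a unique neighbor. -/
lemma uniq_nbr {V : Type*} [Fintype V] [DecidableEq V]
    (G : SimpleGraph V) [DecidableRel G.Adj] {v u j : V}
    (hd : G.degree v = 1) (hu : G.Adj v u) (hj : G.Adj v j) : j = u := by
  have h1 : (G.neighborFinset v).card = 1 := hd
  obtain ⟨a, ha⟩ := Finset.card_eq_one.mp h1
  have h2 : u ∈ G.neighborFinset v := (SimpleGraph.mem_neighborFinset G v u).mpr hu
  have h3 : j ∈ G.neighborFinset v := (SimpleGraph.mem_neighborFinset G v j).mpr hj
  rw [ha, Finset.mem_singleton] at h2 h3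
  rw [h2, h3]

/-- Column of `Balpha` at a pendant vertex. -/
lemma Balpha_col {V : Type*} [Fintype V] [DecidableEq V]
    (G : SimpleGraph V) [DecidableRel G.Adj] (α : ℝ) {v u : V}
    (hd : G.degree v = 1) (hu : G.Adj v u) (j : V) :
    Balpha G α j v = (if j = v then (1 - α) else 0) + (if j = u then (2*α - 1) else 0) := by
  have hA : (adjM G) j v = if j = u then 1 else 0 := by
    simp only [adjM, SimpleGraph.adjMatrix_apply]
    by_cases h : G.Adj j v
    · have h2 := uniq_nbr G hd hu h.symm
      subst h2
      simp [h]
    · have : j ≠ u := by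
        rintro rfl; exact h hu.symm
      simp [h, this]
  have hD : (degM G) j v = if j = v then 1 else 0 := by
    simp only [degM, Matrix.diagonal_apply]
    by_cases h : j = v
    · subst h; simp [hd]
    · simp [h]
  simp only [Balpha, lapM, Matrix.add_apply, Matrix.smul_apply, Matrix.sub_apply,
    smul_eq_mul, hA, hD]
  have hvu : v ≠ u := G.ne_of_adj hu
  by_cases h1 : j = v
  · have h2 : j ≠ u := by rintro rfl; exact (G.irrefl (h1 ▸ hu.symm))
    simp [h1, h2, hvu, hvu.symm]
    try ring
  · by_cases h2 : j = u <;> simp [h1, h2, hvu, hvu.symm] <;> try ring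

/-- Two pendant vertices sharing a common neighbor give an eigenvector for `1 - α`. -/
lemma pendant_eigen {V : Type*} [Fintype V] [DecidableEq V]
    (G : SimpleGraph V) [DecidableRel G.Adj] (α : ℝ) {v v' u : V}
    (hv : G.degree v = 1) (hv' : G.degree v' = 1)
    (hu : G.Adj v u) (hu' : G.Adj v' u) (hne : v ≠ v') :
    (Balpha G α).mulVec ((Pi.single v 1 : V → ℝ) - Pi.single v' 1)
      = (1 - α) • ((Pi.single v 1 : V → ℝ) - Pi.single v' 1) := by
  funext j
  have hsum : ∀ w : V, ∑ k : V, Balpha G α j k * (Pi.single w 1 : V → ℝ) k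
      = Balpha G α j w := by
    intro w
    simp [Pi.single_apply, mul_ite]
  simp only [Matrix.mulVec, dotProduct, Pi.sub_apply, mul_sub,
    Finset.sum_sub_distrib, hsum, Pi.smul_apply, smul_eq_mul]
  rw [Balpha_col G α hv hu j, Balpha_col G α hv' hu' j]
  by_cases h1 : j = v <;> by_cases h2 : j = v'
  · exact absurd (h1.symm.trans h2) hne
  all_goals simp [h1, h2, Pi.single_apply, hne, hne.symm] <;> try ring

theorem stmt_16 {V : Type*} [Fintype V] [DecidableEq V]
    (G : SimpleGraph V) [DecidableRel G.Adj] (α : ℝ)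
    (hα0 : 0 ≤ α) (hα1 : α ≤ 1) :
    (Finset.univ.filter fun v => G.degree v = 1).card -
      (Finset.univ.filter fun v => ∃ u, G.Adj v u ∧ G.degree u = 1).card ≤
    Module.finrank ℝ
      ↥(Module.End.eigenspace (Matrix.toLin' (Balpha G α)) (1 - α)) := by
  classical
  set E := Module.End.eigenspace (Matrix.toLin' (Balpha G α)) (1 - α) with hE
  set P : Finset V := Finset.univ.filter fun v => G.degree v = 1 with hP
  set Q : Finset V := Finset.univ.filter fun v => ∃ u, G.Adj v u ∧ G.degree u = 1 with hQ
  -- choice of neighbor for pendant vertices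
  let n : V → V := fun v => if h : ∃ u, G.Adj v u then h.choose else v
  have hn : ∀ v, G.degree v = 1 → G.Adj v (n v) := by
    intro v hv
    have hpos : ∃ u, G.Adj v u := by
      rw [← SimpleGraph.degree_pos_iff_exists_adj]; omega
    simp only [n, dif_pos hpos]
    exact hpos.choose_spec
  -- choice of pendant neighbor for quasi-pendant vertices
  let r : V → V := fun u => if h : ∃ w, G.Adj u w ∧ G.degree w = 1 then h.choose else u
  have hr : ∀ u, (∃ w, G.Adj u w ∧ G.degree w = 1) →
      G.Adj u (r u) ∧ G.degree (r u) = 1 := by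
    intro u h
    have hru : r u = h.choose := by simp only [r]; rw [dif_pos h]
    rw [hru]
    exact h.choose_spec
  set S : Finset V := P \ Q.image r with hS
  have hcard : P.card - Q.card ≤ S.card :=
    le_trans (Nat.sub_le_sub_left Finset.card_image_le _) (Finset.le_card_sdiff _ _)
  -- member facts
  have hSfacts : ∀ v ∈ S, G.degree v = 1 ∧ n v ∈ Q ∧ v ∉ Q.image r := by
    intro v hv
    rw [hS, Finset.mem_sdiff] at hv
    obtain ⟨hvP, hvI⟩ := hv
    rw [hP, Finset.mem_filter] at hvP
    refine ⟨hvP.2, ?_, hvI⟩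
    rw [hQ, Finset.mem_filter]
    exact ⟨Finset.mem_univ _, ⟨v, (hn v hvP.2).symm, hvP.2⟩⟩
  -- the eigenvectors
  have hmem : ∀ v ∈ S, ((Pi.single v 1 : V → ℝ) - Pi.single (r (n v)) 1) ∈ E := by
    intro v hv
    obtain ⟨hdeg, hnQ, hvI⟩ := hSfacts v hv
    rw [hQ, Finset.mem_filter] at hnQ
    obtain ⟨-, hex⟩ := hnQ
    obtain ⟨hadj, hdeg'⟩ := hr _ hex
    have hne : v ≠ r (n v) := by
      intro h
      exact hvI (Finset.mem_image.mpr ⟨n v, by rw [hQ, Finset.mem_filter]; exact ⟨Finset.mem_univ _, hex⟩, h.symm⟩)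
    rw [hE, Module.End.mem_eigenspace_iff, Matrix.toLin'_apply]
    exact pendant_eigen G α hdeg hdeg' (hn v hdeg) hadj.symm hne
  -- the family in E
  let f : {x // x ∈ S} → E := fun v =>
    ⟨(Pi.single v.1 1 : V → ℝ) - Pi.single (r (n v.1)) 1, hmem v.1 v.2⟩
  have hli : LinearIndependent ℝ f := by
    apply LinearIndependent.of_comp E.subtype
    rw [Fintype.linearIndependent_iff]
    intro g hg i
    have := congrFun hg i.1
    simp only [Function.comp_apply, Submodule.coe_subtype, f, Finset.sum_apply,
      Pi.smul_apply, Pi.sub_apply, Pi.single_apply, Pi.zero_apply, smul_eq_mul] at this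
    rw [Finset.sum_eq_single i] at this
    · have hI : (i.1 : V) ∉ Q.image r := (hSfacts i.1 i.2).2.2
      have h1 : (i.1 : V) ≠ r (n i.1) := by
        intro h
        have hnQ : n i.1 ∈ Q := (hSfacts i.1 i.2).2.1
        exact hI (Finset.mem_image.mpr ⟨n i.1, hnQ, h.symm⟩)
      simpa [h1] using this
    · intro b _ hb
      have hI : (i.1 : V) ∉ Q.image r := (hSfacts i.1 i.2).2.2
      have h1 : (i.1 : V) ≠ b.1 := fun h => hb (Subtype.ext h.symm)
      have h2 : (i.1 : V) ≠ r (n b.1) := by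
        intro h
        have hnQ : n b.1 ∈ Q := (hSfacts b.1 b.2).2.1
        exact hI (Finset.mem_image.mpr ⟨n b.1, hnQ, h.symm⟩)
      simp [h1, h2]
    · intro h
      exact absurd (Finset.mem_univ i) h
  have := hli.fintype_card_le_finrank
  rw [Fintype.card_coe] at this
  exact le_trans hcard this
end
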